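/- For the radial zero-energy scattering equation -u''(r) + v(r)u(r) = 0 with u(0) = 0 and v nonnegative with support in [0, R₀], the scattering length a (defined by u(r) = const·(r - a) for r > R₀) satisfies 0 ≤ a ≤ R₀. -/

import Mathlib

/-!
Normalize `c > 0` (replace `u` by `c u`, whose tail slope is `c²`). Then `u > 0` far out, and
`u` cannot dip below zero on `[0, ∞)`: on a maximal interval where `u < 0` we have
`u'' = v u ≤ 0`, so `u` is concave there and lies above its nonnegative boundary values. Hence
`u'' = v u ≥ 0` on `[0, ∞)`, and convexity with `u 0 = 0` forces the slope `c` of the linear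
tail to dominate the chord slope `u r / r = c (1 - a / r)`, i.e. `0 ≤ a`. Finally `a ≤ R₀`
because otherwise `u` would be negative on `(R₀, a)`.
-/

open Set Filter

lemma exists_Ioo_neg_of_neg {f : ℝ → ℝ} {p q x : ℝ} (hf : ContinuousOn f (Icc p q))
    (hp : 0 ≤ f p) (hq : 0 ≤ f q) (hx : x ∈ Icc p q) (hfx : f x < 0) :
    ∃ s t, p ≤ s ∧ t ≤ q ∧ x ∈ Ioo s t ∧ 0 ≤ f s ∧ 0 ≤ f t ∧ ∀ y ∈ Ioo s t, f y < 0 := by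
  set S := Icc p x ∩ f ⁻¹' Ici 0
  set T := Icc x q ∩ f ⁻¹' Ici 0
  have hS : IsCompact S := isCompact_Icc.of_isClosed_subset
    ((hf.mono (Icc_subset_Icc_right hx.2)).preimage_isClosed_of_isClosed isClosed_Icc isClosed_Ici)
    inter_subset_left
  have hT : IsCompact T := isCompact_Icc.of_isClosed_subset
    ((hf.mono (Icc_subset_Icc_left hx.1)).preimage_isClosed_of_isClosed isClosed_Icc isClosed_Ici)
    inter_subset_left
  obtain ⟨⟨hps, hsx⟩, hs⟩ : sSup S ∈ S := hS.sSup_mem ⟨p, ⟨le_rfl, hx.1⟩, hp⟩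
  obtain ⟨⟨hxt, htq⟩, ht⟩ : sInf T ∈ T := hT.sInf_mem ⟨q, ⟨hx.2, le_rfl⟩, hq⟩
  have hsx' : sSup S < x :=
    hsx.lt_of_ne fun h => by simp only [h, mem_preimage, mem_Ici] at hs; linarith
  have hxt' : x < sInf T :=
    hxt.lt_of_ne fun h => by simp only [← h, mem_preimage, mem_Ici] at ht; linarith
  refine ⟨sSup S, sInf T, hps, htq, ⟨hsx', hxt'⟩, hs, ht, fun y ⟨hsy, hyt⟩ => ?_⟩
  by_contra! hfy
  rcases le_total y x with hyx | hxy
  · exact (le_csSup hS.bddAbove ⟨⟨by linarith, hyx⟩, hfy⟩).not_gt hsy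
  · exact (csInf_le hT.bddBelow ⟨⟨hxy, by linarith⟩, hfy⟩).not_gt hyt

lemma nonneg_on_Icc_of_deriv2_nonpos_of_neg {f : ℝ → ℝ} {p q : ℝ} (hf : ContinuousOn f (Icc p q))
    (hf' : DifferentiableOn ℝ f (Ioo p q)) (hf'' : DifferentiableOn ℝ (deriv f) (Ioo p q))
    (hconc : ∀ x ∈ Ioo p q, f x < 0 → deriv^[2] f x ≤ 0) (hp : 0 ≤ f p) (hq : 0 ≤ f q) :
    ∀ x ∈ Icc p q, 0 ≤ f x := by
  intro x hx
  by_contra! hfx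
  obtain ⟨s, t, hps, htq, hxst, hs, ht, hneg⟩ := exists_Ioo_neg_of_neg hf hp hq hx hfx
  have hsub : Ioo s t ⊆ Ioo p q := Ioo_subset_Ioo hps htq
  have hconcave : ConcaveOn ℝ (Icc s t) f := by
    refine concaveOn_of_deriv2_nonpos (convex_Icc s t) (hf.mono (Icc_subset_Icc hps htq))
      ?_ ?_ ?_ <;> rw [interior_Icc]
    · exact hf'.mono hsub
    · exact hf''.mono hsub
    · exact fun y hy => hconc y (hsub hy) (hneg y hy)
  have hst : s ≤ t := (hxst.1.trans hxst.2).le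
  have hmin := hconcave.min_le_of_mem_Icc (left_mem_Icc.2 hst) (right_mem_Icc.2 hst)
    (Ioo_subset_Icc_self hxst)
  exact hfx.not_ge ((le_min hs ht).trans hmin)

lemma nonneg_of_zeroEnergy {v u : ℝ → ℝ} (hv0 : ∀ r, 0 ≤ v r) (hu : Differentiable ℝ u)
    (hu' : ∀ r, 0 ≤ r → DifferentiableAt ℝ (deriv u) r)
    (hODE : ∀ r, 0 ≤ r → deriv (deriv u) r = v r * u r) (hu0 : u 0 = 0)
    (hlarge : ∀ᶠ r in atTop, 0 ≤ u r) (r : ℝ) (hr : 0 ≤ r) : 0 ≤ u r := by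
  obtain ⟨q, hq, hrq⟩ := (hlarge.and (eventually_ge_atTop r)).exists
  refine nonneg_on_Icc_of_deriv2_nonpos_of_neg hu.continuous.continuousOn hu.differentiableOn
    (fun y hy => (hu' y hy.1.le).differentiableWithinAt) (fun y hy hneg => ?_) hu0.ge hq r ⟨hr, hrq⟩
  rw [Function.iterate_succ_apply', Function.iterate_one, hODE y hy.1.le]
  exact mul_nonpos_of_nonneg_of_nonpos (hv0 y) hneg.le

lemma convexOn_Ici_of_zeroEnergy {v u : ℝ → ℝ} (hv0 : ∀ r, 0 ≤ v r) (hu : Differentiable ℝ u)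
    (hu' : ∀ r, 0 ≤ r → DifferentiableAt ℝ (deriv u) r)
    (hODE : ∀ r, 0 ≤ r → deriv (deriv u) r = v r * u r) (hnonneg : ∀ r, 0 ≤ r → 0 ≤ u r) :
    ConvexOn ℝ (Ici 0) u := by
  refine convexOn_of_deriv2_nonneg (convex_Ici 0) hu.continuous.continuousOn hu.differentiableOn
    ?_ ?_ <;> rw [interior_Ici]
  · exact fun x hx => (hu' x (le_of_lt hx)).differentiableWithinAt
  · intro x hx
    rw [Function.iterate_succ_apply', Function.iterate_one, hODE x (le_of_lt hx)]
    exact mul_nonneg (hv0 x) (hnonneg x (le_of_lt hx))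

lemma scattering_length_mem_Icc_of_pos {v u : ℝ → ℝ} {R₀ c a : ℝ} (hR₀ : 0 < R₀)
    (hv0 : ∀ r, 0 ≤ v r) (hu : Differentiable ℝ u)
    (hu' : ∀ r, 0 ≤ r → DifferentiableAt ℝ (deriv u) r)
    (hODE : ∀ r, 0 ≤ r → deriv (deriv u) r = v r * u r) (hu0 : u 0 = 0) (hc : 0 < c)
    (hlin : ∀ r, R₀ < r → u r = c * (r - a)) :
    0 ≤ a ∧ a ≤ R₀ := by
  have hlarge : ∀ᶠ r in atTop, 0 ≤ u r := by
    filter_upwards [eventually_gt_atTop R₀, eventually_ge_atTop a] with r hR₀r har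
    rw [hlin r hR₀r]
    exact mul_nonneg hc.le (sub_nonneg.2 har)
  have hnonneg := nonneg_of_zeroEnergy hv0 hu hu' hODE hu0 hlarge
  constructor
  · have hslope := (convexOn_Ici_of_zeroEnergy hv0 hu hu' hODE hnonneg).slope_mono_adjacent
      (x := 0) (y := R₀ + 1) (z := R₀ + 2) self_mem_Ici (by simp only [mem_Ici]; linarith)
      (by linarith) (by linarith)
    rw [hu0, hlin _ (by linarith), hlin _ (by linarith),
      div_le_div_iff₀ (by linarith) (by linarith)] at hslope
    nlinarith
  · by_contra! haR₀
    have hmid := hnonneg ((R₀ + a) / 2) (by linarith)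
    rw [hlin _ (by linarith)] at hmid
    nlinarith

theorem scattering_length_in_range_general
    (v : ℝ → ℝ) (R₀ : ℝ) (hR₀ : 0 < R₀)
    (hv0 : ∀ r, 0 ≤ v r)
    (u : ℝ → ℝ)
    (hu : ContDiff ℝ 1 u)
    (hu' : ∀ r, 0 ≤ r → DifferentiableAt ℝ (deriv u) r)
    (hODE : ∀ r, 0 ≤ r → deriv (deriv u) r = v r * u r)
    (hu0 : u 0 = 0)
    (c a : ℝ) (hc : c ≠ 0)
    (hlin : ∀ r, R₀ < r → u r = c * (r - a)) :
    0 ≤ a ∧ a ≤ R₀ := by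
  have hderiv : deriv (fun r => c * u r) = fun r => c * deriv u r := deriv_const_mul_field' c
  refine scattering_length_mem_Icc_of_pos (u := fun r => c * u r) (c := c * c) hR₀ hv0
    ((hu.differentiable one_ne_zero).const_mul c) (fun r hr => ?_) (fun r hr => ?_)
    (by simp [hu0]) (mul_self_pos.2 hc) (fun r hr => ?_)
  · rw [hderiv]
    exact (hu' r hr).const_mul c
  · rw [hderiv, deriv_const_mul_field']
    simp only [hODE r hr]
    ring
  · rw [hlin r hr]
    ring

/-- For the radial zero-energy scattering equation `-u'' + v u = 0` on `[0,∞)` with `u(0) = 0`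
and `v ≥ 0` supported in `[0, R₀]`, the scattering length `a`, defined by
`u(r) = c (r - a)` for `r > R₀` with `c ≠ 0`, satisfies `0 ≤ a ≤ R₀`. -/
theorem scattering_length_in_range
    (v : ℝ → ℝ) (R₀ : ℝ) (hR₀ : 0 < R₀)
    (hv0 : ∀ r, 0 ≤ v r) (hvmeas : Measurable v)
    (hsupp : ∀ r, R₀ < r → v r = 0)
    (u : ℝ → ℝ)
    (hu : ContDiff ℝ 1 u)
    (hu' : ∀ r, 0 ≤ r → DifferentiableAt ℝ (deriv u) r)
    (hODE : ∀ r, 0 ≤ r → deriv (deriv u) r = v r * u r)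
    (hu0 : u 0 = 0)
    (c a : ℝ) (hc : c ≠ 0)
    (hlin : ∀ r, R₀ < r → u r = c * (r - a)) :
    0 ≤ a ∧ a ≤ R₀ :=
  scattering_length_in_range_general v R₀ hR₀ hv0 u hu hu' hODE hu0 c a hc hlin
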